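/- arXiv:math/0701686 — 5 statements merged into one kernel-verified Lean document; each statement's English description precedes it below -/
import Mathlib

section
/- Let H be a semiregular abelian subgroup of a transitive permutation group G on a finite set X, with orbits X_1,...,X_m. Let B be a G-invariant partition of X, and suppose B_1, B_2 are blocks of B that both meet X_i for some i. Then for every j, if B_1 meets X_j then B_2 meets X_j. -/
open MulAction Pointwise

/-- If two blocks of a `G`-invariant partition both meet an orbit `X_i` of a semiregular
abelian subgroup `H ≤ G`, then they meet exactly the same `H`-orbits. -/
theorem stmt1 {G X : Type*} [Group G] [Fintype X] [MulAction G X]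
    (htrans : ∀ x y : X, ∃ g : G, g • x = y)
    (H : Subgroup G)
    (habel : ∀ a b : H, a * b = b * a)
    (hsemi : ∀ (h : H) (x : X), (h : G) • x = x → h = 1)
    (B : Set (Set X)) (hpart : Setoid.IsPartition B)
    (hinv : ∀ (g : G), ∀ b ∈ B, g • b ∈ B)
    (B1 B2 : Set X) (hB1 : B1 ∈ B) (hB2 : B2 ∈ B)
    (xi xj : X)
    (h1i : (B1 ∩ orbit H xi).Nonempty) (h2i : (B2 ∩ orbit H xi).Nonempty)
    (h1j : (B1 ∩ orbit H xj).Nonempty) :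
    (B2 ∩ orbit H xj).Nonempty := by
  obtain ⟨b1, hb1B, h1, hh1⟩ := h1i
  obtain ⟨b2, hb2B, h2, hh2⟩ := h2i
  -- h sends b1 to b2
  set h : H := h2 * h1⁻¹ with hh
  have hsend : (h : G) • b1 = b2 := by
    rw [← hh1, ← hh2]
    show (h2 * h1⁻¹) • h1 • xi = h2 • xi
    rw [smul_smul, inv_mul_cancel_right]
  -- h • B1 ∈ B and contains b2, hence equals B2
  have hmem : ((h : G) • B1) ∈ B := hinv _ _ hB1
  have hb2mem : b2 ∈ (h : G) • B1 := by
    rw [← hsend]; exact Set.smul_mem_smul_set hb1B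
  obtain ⟨b, ⟨hbB, hb2b⟩, huniq⟩ := hpart.2 b2
  have hEq : (h : G) • B1 = B2 := by
    rw [huniq _ ⟨hmem, hb2mem⟩, huniq _ ⟨hB2, hb2B⟩]
  obtain ⟨y, hyB1, k, hk⟩ := h1j
  refine ⟨(h : G) • y, ?_, ?_⟩
  · rw [← hEq]; exact Set.smul_mem_smul_set hyB1
  · exact ⟨h * k, by rw [← hk]; show (h * k) • xj = _; rw [mul_smul]; rfl⟩
end

section
/- Let H be a semiregular abelian subgroup of a transitive permutation group G on a finite set X with orbits X_1,...,X_m, and let B be a G-invariant partition of X. Define a relation ~ on {1,...,m} by i ~ j iff some block of B meets both X_i and X_j. Then ~ is an equivalence relation. -/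
open MulAction Pointwise

/-- The relation "some block of the `G`-invariant partition `B` meets both the `H`-orbit
of `x` and the `H`-orbit of `y`" is an equivalence relation. -/
theorem stmt2 {G X : Type*} [Group G] [Fintype X] [MulAction G X]
    (htrans : ∀ x y : X, ∃ g : G, g • x = y)
    (H : Subgroup G)
    (habel : ∀ a b : H, a * b = b * a)
    (hsemi : ∀ (h : H) (x : X), (h : G) • x = x → h = 1)
    (B : Set (Set X)) (hpart : Setoid.IsPartition B)
    (hinv : ∀ (g : G), ∀ b ∈ B, g • b ∈ B) :
    Equivalence (fun x y : X =>
      ∃ b ∈ B, (b ∩ orbit H x).Nonempty ∧ (b ∩ orbit H y).Nonempty) := by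
  constructor
  · -- reflexivity
    intro x
    obtain ⟨b, ⟨hb, hxb⟩, -⟩ := hpart.2 x
    exact ⟨b, hb, ⟨x, hxb, mem_orbit_self x⟩, ⟨x, hxb, mem_orbit_self x⟩⟩
  · -- symmetry
    rintro x y ⟨b, hb, h1, h2⟩
    exact ⟨b, hb, h2, h1⟩
  · -- transitivity
    rintro x y z ⟨b, hb, ⟨p, hpb, hpx⟩, ⟨u, hub, hu⟩⟩ ⟨b', hb', ⟨v, hvb', hv⟩, ⟨q, hqb', hqz⟩⟩
    -- u ∈ orbit H y, v ∈ orbit H y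
    obtain ⟨h1, hh1⟩ := hu
    obtain ⟨h2, hh2⟩ := hv
    simp only [Subgroup.smul_def] at hh1 hh2
    set h : H := h2 * h1⁻¹ with hh
    have hvu : (h : G) • u = v := by
      rw [← hh1, ← hh2, hh]
      simp [mul_smul]
    -- h • b is a block containing v, hence equals b'
    have hhbB : (h : G) • b ∈ B := hinv _ b hb
    have hvhb : v ∈ (h : G) • b := ⟨u, hub, hvu⟩
    have heq : (h : G) • b = b' := by
      obtain ⟨c, -, hcu⟩ := hpart.2 v
      rw [hcu _ ⟨hhbB, hvhb⟩, hcu _ ⟨hb', hvb'⟩]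
    refine ⟨b', hb', ⟨(h : G) • p, ?_, ?_⟩, ⟨q, hqb', hqz⟩⟩
    · rw [← heq]; exact ⟨p, hpb, rfl⟩
    · obtain ⟨k, hk⟩ := hpx
      refine ⟨h * k, ?_⟩
      simp only [Subgroup.smul_def] at hk ⊢
      push_cast
      rw [mul_smul, hk]
end

section
/- Let G be a transitive permutation group on a finite set X containing an abelian semiregular subgroup H with m orbits, let Γ be a G-invariant digraph with symbol 𝕊 = (S_{ij}) relative to H, let λ be an eigenvalue of Γ, and let K_λ be the kernel of the G-action on the λ-eigenspace W_λ. Then K_λ ∩ H = ⟨K_{𝕊,λ}⟩^⊥, where K_{𝕊,λ} = {χ ∈ H* : det(χ(𝕊) − λI_m) = 0} and ⟨K_{𝕊,λ}⟩^⊥ = ∩_{χ ∈ ⟨K_{𝕊,λ}⟩} Ker χ. -/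
/-!
By semiregularity, `(i, k) ↦ k • x i` identifies `X` with `Fin m × H`. A vector transforming by
a character `χ` of `H` is determined by its values at the base points, and there the adjacency
matrix acts through `χ(𝕊)`. Hence a nonzero `λ`-eigenvector of `χ(𝕊)`, which exists exactly when
`χ ∈ K_{𝕊,λ}`, lifts to a `λ`-eigenvector of `Γ` on which `h` acts by `χ(h)`: this gives
`K_λ ∩ H ⊆ ⟨K_{𝕊,λ}⟩^⊥`. Conversely, by orthogonality of characters every `λ`-eigenvector is the
sum of its isotypic components, each again a `λ`-eigenvector; a nonzero `χ`-component forces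
`χ ∈ K_{𝕊,λ}`, so an `h` in the annihilator fixes every component.
-/

open MulAction
open scoped Classical
open scoped Matrix

section Transversal

variable {H X ι : Type*} [Group H] [MulAction H X]

theorem bijective_smul_basepoint {x : ι → X} (hfree : ∀ (k : H) (y : X), k • y = y → k = 1)
    (horb : ∀ y : X, ∃ i, y ∈ orbit H (x i))
    (hdisj : ∀ i j, i ≠ j → orbit H (x i) ≠ orbit H (x j)) :
    Function.Bijective fun p : ι × H => p.2 • x p.1 := by
  refine ⟨fun ⟨i, k⟩ ⟨j, k'⟩ hkk => ?_, fun y => ?_⟩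
  · dsimp only at hkk
    obtain rfl : i = j := by
      by_contra hne
      refine hdisj i j hne (orbit_eq_iff.mpr ⟨k⁻¹ * k', ?_⟩)
      show (k⁻¹ * k') • x j = x i
      rw [mul_smul, ← hkk, inv_smul_smul]
    have hfix : (k'⁻¹ * k) • x i = x i := by rw [mul_smul, hkk, inv_smul_smul]
    rw [inv_mul_eq_one.mp (hfree _ _ hfix)]
  · obtain ⟨i, k, hk⟩ := horb y
    exact ⟨(i, k), hk⟩

end Transversal

section Characters

variable {H X R ι : Type*} [Group H] [MulAction H X] [CommRing R]

def TransformsBy (χ : H →* Rˣ) (v : X → R) : Prop :=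
  ∀ (k : H) (y : X), v (k • y) = χ k * v y

theorem Matrix.mulVec_comp_smul [Fintype X] {A : Matrix X X R}
    (hA : ∀ (k : H) (a b : X), A (k • a) (k • b) = A a b) (v : X → R) (k : H) (z : X) :
    (A *ᵥ fun t => v (k • t)) z = (A *ᵥ v) (k • z) :=
  Fintype.sum_equiv (MulAction.toPerm k) _ _ fun t => by simp [hA]

theorem TransformsBy.mulVec [Fintype X] {A : Matrix X X R}
    (hA : ∀ (k : H) (a b : X), A (k • a) (k • b) = A a b) {χ : H →* Rˣ} {v : X → R}
    (hv : TransformsBy χ v) : TransformsBy χ (A *ᵥ v) := by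
  intro k z
  rw [← A.mulVec_comp_smul hA, funext (hv k)]
  simp [Matrix.mulVec, dotProduct, Finset.mul_sum, mul_left_comm]

theorem TransformsBy.eq_of_comp_eq {x : ι → X}
    (hx : Function.Surjective fun p : ι × H => p.2 • x p.1) {χ : H →* Rˣ} {v w : X → R}
    (hv : TransformsBy χ v) (hw : TransformsBy χ w) (h : v ∘ x = w ∘ x) : v = w := by
  funext y
  obtain ⟨⟨i, k⟩, rfl⟩ := hx y
  rw [hv k, hw k]
  exact congrArg _ (congrFun h i)

theorem exists_transformsBy_comp_eq {x : ι → X}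
    (hx : Function.Bijective fun p : ι × H => p.2 • x p.1) (χ : H →* Rˣ) (c : ι → R) :
    ∃ v : X → R, TransformsBy χ v ∧ v ∘ x = c := by
  let e := Equiv.ofBijective _ hx
  refine ⟨fun y => χ (e.symm y).2 * c (e.symm y).1, fun k y => ?_, funext fun i => ?_⟩
  · obtain ⟨⟨i, k'⟩, rfl⟩ := e.surjective y
    have : e.symm (k • e (i, k')) = (i, k * k') := e.symm_apply_eq.mpr (mul_smul k k' (x i)).symm
    simp [this, mul_assoc]
  · have : e.symm (x i) = (i, 1) := e.symm_apply_eq.mpr (one_smul H (x i)).symm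
    simp [this]

variable [Fintype H]

/-- For the 0/1 adjacency matrix of `Γ` this is the paper's `χ(𝕊)`. -/
def charSymbol (A : Matrix X X R) (x : ι → X) (χ : H →* Rˣ) : Matrix ι ι R :=
  Matrix.of fun i j => ∑ k : H, A (x i) (k • x j) * χ k

/-- `|H|` times the projection of `w` onto the `χ`-isotypic component. -/
def charComponent (χ : H →* Rˣ) (w : X → R) (z : X) : R :=
  ∑ k : H, (χ k⁻¹ : R) * w (k • z)

theorem transformsBy_charComponent (χ : H →* Rˣ) (w : X → R) :
    TransformsBy χ (charComponent χ w) := by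
  intro k₀ z
  rw [charComponent, charComponent, Finset.mul_sum]
  refine Fintype.sum_equiv (Equiv.mulRight k₀) _ _ fun k => ?_
  rw [Equiv.coe_mulRight, mul_smul, ← mul_assoc, ← Units.val_mul, ← map_mul, mul_inv_rev,
    mul_inv_cancel_left]

theorem Matrix.mulVec_charComponent [Fintype X] {A : Matrix X X R}
    (hA : ∀ (k : H) (a b : X), A (k • a) (k • b) = A a b) (χ : H →* Rˣ) (w : X → R) :
    A *ᵥ charComponent χ w = charComponent χ (A *ᵥ w) := by
  funext z
  simp only [charComponent, ← A.mulVec_comp_smul hA]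
  simp only [Matrix.mulVec, dotProduct, charComponent, Finset.mul_sum]
  rw [Finset.sum_comm]
  simp only [mul_left_comm]

variable [Fintype X] [Fintype ι] {x : ι → X}

theorem TransformsBy.mulVec_apply_basepoint (hx : Function.Bijective fun p : ι × H => p.2 • x p.1)
    (A : Matrix X X R) {χ : H →* Rˣ} {v : X → R} (hv : TransformsBy χ v) (i : ι) :
    (A *ᵥ v) (x i) = (charSymbol A x χ *ᵥ (v ∘ x)) i := by
  simp only [Matrix.mulVec, dotProduct, charSymbol, Matrix.of_apply, Finset.sum_mul]
  rw [← (Equiv.ofBijective _ hx).sum_comp, Fintype.sum_prod_type]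
  refine Finset.sum_congr rfl fun j _ => Finset.sum_congr rfl fun k _ => ?_
  simp [hv k, mul_assoc]

theorem TransformsBy.mulVec_eq_smul_iff (hx : Function.Bijective fun p : ι × H => p.2 • x p.1)
    {A : Matrix X X R} (hA : ∀ (k : H) (a b : X), A (k • a) (k • b) = A a b) {χ : H →* Rˣ}
    {v : X → R} (hv : TransformsBy χ v) (μ : R) :
    A *ᵥ v = μ • v ↔ charSymbol A x χ *ᵥ (v ∘ x) = μ • (v ∘ x) := by
  constructor
  · intro h
    funext i
    rw [← hv.mulVec_apply_basepoint hx, h]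
    rfl
  · intro h
    refine (hv.mulVec hA).eq_of_comp_eq hx.2 (fun k y => ?_) (funext fun i => ?_)
    · simp [hv k y, mul_left_comm]
    · simp [hv.mulVec_apply_basepoint hx, h]

variable [IsDomain R] [DecidableEq ι] {A : Matrix X X R}

theorem apply_eq_one_of_det_eq_zero (hx : Function.Bijective fun p : ι × H => p.2 • x p.1)
    (hA : ∀ (k : H) (a b : X), A (k • a) (k • b) = A a b) {μ : R} {h : H}
    (hfix : ∀ w : X → R, A *ᵥ w = μ • w → ∀ y, w (h • y) = w y) {χ : H →* Rˣ}
    (hdet : (charSymbol A x χ - μ • 1).det = 0) : χ h = 1 := by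
  obtain ⟨c, hc0, hc⟩ := Matrix.exists_mulVec_eq_zero_iff.mpr hdet
  rw [Matrix.sub_mulVec, Matrix.smul_mulVec, Matrix.one_mulVec, sub_eq_zero] at hc
  obtain ⟨v, hv, rfl⟩ := exists_transformsBy_comp_eq hx χ c
  have hfixv := hfix v ((hv.mulVec_eq_smul_iff hx hA μ).2 hc)
  obtain ⟨i, hi⟩ := Function.ne_iff.mp hc0
  have : (χ h : R) * v (x i) = 1 * v (x i) := by rw [← hv h, hfixv, one_mul]
  exact Units.val_eq_one.mp (mul_right_cancel₀ hi this)

theorem TransformsBy.eq_zero_of_det_ne_zero (hx : Function.Bijective fun p : ι × H => p.2 • x p.1)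
    (hA : ∀ (k : H) (a b : X), A (k • a) (k • b) = A a b) {χ : H →* Rˣ} {v : X → R}
    (hv : TransformsBy χ v) {μ : R} (heig : A *ᵥ v = μ • v)
    (hdet : (charSymbol A x χ - μ • 1).det ≠ 0) : v = 0 := by
  have hc := (hv.mulVec_eq_smul_iff hx hA μ).1 heig
  refine hv.eq_of_comp_eq hx.2 (fun k y => (mul_zero _).symm) ?_
  by_contra hne
  refine hdet (Matrix.exists_mulVec_eq_zero_iff.mp ⟨_, hne, ?_⟩)
  rw [Matrix.sub_mulVec, Matrix.smul_mulVec, Matrix.one_mulVec, hc, sub_self]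

end Characters

section Orthogonality

variable {H : Type*} [CommGroup H] [Finite H]

instance : NeZero (Monoid.exponent H : ℂ) :=
  ⟨Nat.cast_ne_zero.mpr Monoid.exponent_ne_zero_of_finite⟩

instance : Finite (H →* ℂˣ) :=
  Finite.of_equiv H (CommGroup.monoidHom_mulEquiv_of_hasEnoughRootsOfUnity H ℂ).some.symm

theorem sum_apply_units_eq_zero [Fintype (H →* ℂˣ)] {k : H} (hk : k ≠ 1) :
    ∑ χ : H →* ℂˣ, (χ k : ℂ) = 0 := by
  obtain ⟨χ, hχ⟩ := CommGroup.exists_apply_ne_one_of_hasEnoughRootsOfUnity H ℂ hk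
  exact sum_hom_units_eq_zero ((Units.coeHom ℂ).comp (MonoidHom.eval k))
    fun h => hχ (Units.val_eq_one.mp (DFunLike.congr_fun h χ))

variable [Fintype H] {X : Type*} [MulAction H X]

theorem sum_charComponent [Fintype (H →* ℂˣ)] (w : X → ℂ) (z : X) :
    ∑ χ : H →* ℂˣ, charComponent χ w z = Fintype.card (H →* ℂˣ) * w z := by
  simp only [charComponent]
  rw [Finset.sum_comm]
  simp_rw [← Finset.sum_mul]
  rw [Finset.sum_eq_single 1]
  · simp
  · intro k _ hk
    rw [sum_apply_units_eq_zero (inv_ne_one.mpr hk), zero_mul]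
  · simp

variable [Fintype X] {ι : Type*} [Fintype ι] [DecidableEq ι] {x : ι → X} {A : Matrix X X ℂ}

theorem apply_smul_eq_of_forall_det_eq_zero
    (hx : Function.Bijective fun p : ι × H => p.2 • x p.1)
    (hA : ∀ (k : H) (a b : X), A (k • a) (k • b) = A a b) {μ : ℂ} {h : H}
    (hchar : ∀ χ : H →* ℂˣ, (charSymbol A x χ - μ • 1).det = 0 → χ h = 1)
    {w : X → ℂ} (hw : A *ᵥ w = μ • w) (y : X) : w (h • y) = w y := by
  have : Fintype (H →* ℂˣ) := Fintype.ofFinite _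
  have hcomp (χ : H →* ℂˣ) : charComponent χ w (h • y) = charComponent χ w y := by
    have hv := transformsBy_charComponent χ w
    have heig : A *ᵥ charComponent χ w = μ • charComponent χ w := by
      rw [A.mulVec_charComponent hA, hw]
      funext z
      simp [charComponent, Finset.mul_sum, mul_left_comm]
    by_cases hdet : (charSymbol A x χ - μ • 1).det = 0
    · rw [hv h, hchar χ hdet, Units.val_one, one_mul]
    · rw [hv.eq_zero_of_det_ne_zero hx hA heig hdet, Pi.zero_apply, Pi.zero_apply]
  have hcard : (Fintype.card (H →* ℂˣ) : ℂ) ≠ 0 := Nat.cast_ne_zero.mpr Fintype.card_ne_zero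
  refine mul_left_cancel₀ hcard ?_
  rw [← sum_charComponent, ← sum_charComponent]
  exact Finset.sum_congr rfl fun χ _ => hcomp χ

end Orthogonality

theorem stmt14_general {G X : Type*} [Group G] [Fintype X] [MulAction G X]
    (H : Subgroup G) [Fintype H]
    (habel : ∀ a b : H, a * b = b * a)
    (hsemi : ∀ (h : H) (x : X), (h : G) • x = x → h = 1)
    {m : ℕ} (x : Fin m → X)
    (horb : ∀ y : X, ∃ i, y ∈ orbit H (x i))
    (hdisj : ∀ i j, i ≠ j → orbit H (x i) ≠ orbit H (x j))
    (R : X → X → Prop)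
    (hinv : ∀ (g : G) (a b : X), R (g • a) (g • b) ↔ R a b)
    (A : Matrix X X ℂ) (hA : ∀ a b, A a b = if R a b then 1 else 0)
    (S : Fin m → Fin m → Set H)
    (hS : ∀ i j, S i j = {h : H | R (x i) ((h : G) • x j)})
    (lam : ℂ)
    (Kchar : Set (H →* ℂˣ))
    (hK : Kchar = {χ : H →* ℂˣ | Matrix.det
        ((Matrix.of fun i j : Fin m => ∑ h : H, if h ∈ S i j then ((χ h : ℂˣ) : ℂ) else 0)
          - lam • (1 : Matrix (Fin m) (Fin m) ℂ)) = 0}) :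
    ∀ h : H,
      (∀ w : X → ℂ, A.mulVec w = lam • w → ∀ y : X, w ((h : G) • y) = w y)
        ↔ (∀ χ ∈ Subgroup.closure Kchar, χ h = 1) := by
  intro h
  have hx := bijective_smul_basepoint hsemi horb hdisj
  have hAinv (k : H) (a b : X) : A (k • a) (k • b) = A a b := by
    simp only [hA, Subgroup.smul_def, hinv]
  have hmem (χ : H →* ℂˣ) : χ ∈ Kchar ↔ (charSymbol A x χ - lam • 1).det = 0 := by
    rw [hK, Set.mem_ofPred_eq]
    congr! 3
    ext i j
    simp [charSymbol, hS, hA, Subgroup.smul_def]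
  let : CommGroup H := { H.toGroup with mul_comm := habel }
  constructor
  · intro hfix
    have hker : Kchar ⊆ (MonoidHom.eval (N := ℂˣ) h).ker := fun χ hχ =>
      apply_eq_one_of_det_eq_zero hx hAinv hfix ((hmem χ).1 hχ)
    exact fun χ hχ => (Subgroup.closure_le _).2 hker hχ
  · intro hcl w hw y
    exact apply_smul_eq_of_forall_det_eq_zero hx hAinv
      (fun χ hdet => hcl χ (Subgroup.subset_closure ((hmem χ).2 hdet))) hw y

/-- `K_λ ∩ H = ⟨K_{𝕊,λ}⟩^⊥`:  an element `h` of the abelian semiregular subgroup `H`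
lies in the kernel of the `G`-action on the `λ`-eigenspace of a `G`-invariant digraph
with symbol `𝕊` iff `χ(h) = 1` for every character `χ` in the subgroup generated by
`K_{𝕊,λ} = {χ : det(χ(𝕊) − λI) = 0}`. -/
theorem stmt14 {G X : Type*} [Group G] [Fintype X] [MulAction G X]
    (htrans : ∀ x y : X, ∃ g : G, g • x = y)
    (H : Subgroup G) [Fintype H]
    (habel : ∀ a b : H, a * b = b * a)
    (hsemi : ∀ (h : H) (x : X), (h : G) • x = x → h = 1)
    {m : ℕ} (x : Fin m → X)
    (horb : ∀ y : X, ∃ i, y ∈ orbit H (x i))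
    (hdisj : ∀ i j, i ≠ j → orbit H (x i) ≠ orbit H (x j))
    (R : X → X → Prop)
    (hinv : ∀ (g : G) (a b : X), R (g • a) (g • b) ↔ R a b)
    (A : Matrix X X ℂ) (hA : ∀ a b, A a b = if R a b then 1 else 0)
    (S : Fin m → Fin m → Set H)
    (hS : ∀ i j, S i j = {h : H | R (x i) ((h : G) • x j)})
    (lam : ℂ) (hlam : ∃ w : X → ℂ, w ≠ 0 ∧ A.mulVec w = lam • w)
    (Kchar : Set (H →* ℂˣ))
    (hK : Kchar = {χ : H →* ℂˣ | Matrix.det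
        ((Matrix.of fun i j : Fin m => ∑ h : H, if h ∈ S i j then ((χ h : ℂˣ) : ℂ) else 0)
          - lam • (1 : Matrix (Fin m) (Fin m) ℂ)) = 0}) :
    ∀ h : H,
      (∀ w : X → ℂ, A.mulVec w = lam • w → ∀ y : X, w ((h : G) • y) = w y)
        ↔ (∀ χ ∈ Subgroup.closure Kchar, χ h = 1) :=
  stmt14_general H habel hsemi x horb hdisj R hinv A hA S hS lam Kchar hK
end

section
/- Let G be a transitive permutation group on X containing an abelian semiregular subgroup H with two orbits X_1, X_2 and base points x_1, x_2, let Γ be a G-invariant digraph with symbol 𝕊 = [[S,T],[Q,R]], and set d = |S| − |T|. For g ∈ G, define M_g = {h ∈ H : (x_1^h)^g ∈ X_1} and N_g = {h ∈ H : (x_2^h)^g ∈ X_1}. Then for every character χ ∈ H* with det(χ(𝕊) − dI_2) ≠ 0, one has χ(M_g) = 0 and χ(N_g) = 0. -/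
open MulAction
open scoped Classical

/-- Theorem on mixers for bi-Cayley digraphs: with symbol `[[S,T],[Q,R]]`,
`d = |S| − |T|`, and `M_g = {h : (x_1^h)^g ∈ X_1}`, `N_g = {h : (x_2^h)^g ∈ X_1}`,
every character `χ` with `det(χ(𝕊) − dI) ≠ 0` satisfies `χ(M_g) = χ(N_g) = 0`. -/
theorem stmt17 {G X : Type*} [Group G] [Fintype X] [MulAction G X]
    (htrans : ∀ x y : X, ∃ g : G, g • x = y)
    (H : Subgroup G) [Fintype H]
    (habel : ∀ a b : H, a * b = b * a)
    (hsemi : ∀ (h : H) (x : X), (h : G) • x = x → h = 1)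
    (x1 x2 : X)
    (horb : ∀ y : X, y ∈ orbit H x1 ∨ y ∈ orbit H x2)
    (hdisj : orbit H x1 ≠ orbit H x2)
    (R : X → X → Prop)
    (hinv : ∀ (g : G) (a b : X), R (g • a) (g • b) ↔ R a b)
    (S T Q Rr : Finset H)
    (hS : ∀ h : H, h ∈ S ↔ R x1 ((h : G) • x1))
    (hT : ∀ h : H, h ∈ T ↔ R x1 ((h : G) • x2))
    (hQ : ∀ h : H, h ∈ Q ↔ R x2 ((h : G) • x1))
    (hR : ∀ h : H, h ∈ Rr ↔ R x2 ((h : G) • x2))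
    (d : ℂ) (hd : d = (S.card : ℂ) - (T.card : ℂ))
    (g : G) (χ : H →* ℂˣ)
    (hχ : Matrix.det
        (!![(∑ h ∈ S, ((χ h : ℂˣ) : ℂ)), (∑ h ∈ T, ((χ h : ℂˣ) : ℂ));
            (∑ h ∈ Q, ((χ h : ℂˣ) : ℂ)), (∑ h ∈ Rr, ((χ h : ℂˣ) : ℂ))]
          - d • (1 : Matrix (Fin 2) (Fin 2) ℂ)) ≠ 0) :
    (∑ h : H, if g • ((h : G) • x1) ∈ orbit H x1 then ((χ h : ℂˣ) : ℂ) else 0) = 0 ∧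
    (∑ h : H, if g • ((h : G) • x2) ∈ orbit H x1 then ((χ h : ℂˣ) : ℂ) else 0) = 0 := by
  classical
  -- injectivity of the parametrization of orbits by H
  have hinj : ∀ (x : X) (a b : H), (a : G) • x = (b : G) • x → a = b := by
    intro x a b hab
    have h1 : ((b⁻¹ * a : H) : G) • x = x := by
      show ((b : G)⁻¹ * (a : G)) • x = x
      rw [mul_smul, hab, inv_smul_smul]
    exact (inv_mul_eq_one.mp (hsemi _ _ h1)).symm
  -- disjointness of the two orbits
  have hdis : ∀ y : X, y ∈ orbit H x1 → y ∈ orbit H x2 → False := fun y h1 h2 =>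
    hdisj (by rw [← orbit_eq_iff.mpr h1, ← orbit_eq_iff.mpr h2])
  -- splitting sums over X
  have hbij : Function.Bijective
      (Sum.elim (fun k : H => (k : G) • x1) (fun k : H => (k : G) • x2)) := by
    constructor
    · rintro (a | a) (b | b) hab <;> simp only [Sum.elim_inl, Sum.elim_inr] at hab
      · exact congrArg Sum.inl (hinj _ _ _ hab)
      · refine absurd hab fun hh => hdis ((a : G) • x1) ⟨a, rfl⟩ ?_
        rw [hh]; exact ⟨b, rfl⟩
      · refine absurd hab fun hh => hdis ((b : G) • x1) ⟨b, rfl⟩ ?_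
        rw [← hh]; exact ⟨a, rfl⟩
      · exact congrArg Sum.inr (hinj _ _ _ hab)
    · intro y
      rcases horb y with hy | hy
      · obtain ⟨k, hk⟩ := hy; exact ⟨Sum.inl k, hk⟩
      · obtain ⟨k, hk⟩ := hy; exact ⟨Sum.inr k, hk⟩
  have hsplit : ∀ F : X → ℂ,
      ∑ z : X, F z = (∑ k : H, F ((k : G) • x1)) + ∑ k : H, F ((k : G) • x2) := by
    intro F
    rw [← hbij.sum_comp F, Fintype.sum_sum_type]
    rfl
  -- adjacency transfer
  have hadj : ∀ (k h : H) (u v : X),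
      R ((k : G) • u) ((h : G) • v) ↔ R u (((k⁻¹ * h : H) : G) • v) := by
    intro k h u v
    have e1 : (k : G) • (((k⁻¹ * h : H) : G) • v) = (h : G) • v := by
      show (k : G) • (((k : G)⁻¹ * (h : G)) • v) = _
      rw [smul_smul, mul_inv_cancel_left]
    have h2 := hinv (k : G) u (((k⁻¹ * h : H) : G) • v)
    rw [e1] at h2
    exact h2
  have hRS : ∀ k h : H, R ((k : G) • x1) ((h : G) • x1) ↔ k⁻¹ * h ∈ S :=
    fun k h => (hadj k h x1 x1).trans (hS _).symm
  have hRT : ∀ k h : H, R ((k : G) • x1) ((h : G) • x2) ↔ k⁻¹ * h ∈ T :=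
    fun k h => (hadj k h x1 x2).trans (hT _).symm
  have hRQ : ∀ k h : H, R ((k : G) • x2) ((h : G) • x1) ↔ k⁻¹ * h ∈ Q :=
    fun k h => (hadj k h x2 x1).trans (hQ _).symm
  have hRR : ∀ k h : H, R ((k : G) • x2) ((h : G) • x2) ↔ k⁻¹ * h ∈ Rr :=
    fun k h => (hadj k h x2 x2).trans (hR _).symm
  -- counting lemma
  have hcount : ∀ (U : Finset H) (a : H),
      (∑ k : H, if k⁻¹ * a ∈ U then (1 : ℂ) else 0) = U.card := by
    intro U a
    rw [← Equiv.sum_comp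
        (⟨fun u => a * u⁻¹, fun k => k⁻¹ * a, fun u => by group, fun k => by group⟩ : H ≃ H)
        (fun k => if k⁻¹ * a ∈ U then (1 : ℂ) else 0)]
    have h1 : ∀ u : H, (a * u⁻¹)⁻¹ * a = u := fun u => by group
    simp only [Equiv.coe_fn_mk, h1]
    simp [Finset.sum_ite_mem]
  -- weighted counting lemma
  have hw : ∀ (U : Finset H) (k : H),
      (∑ h : H, if k⁻¹ * h ∈ U then (χ h : ℂ) else 0) = (χ k : ℂ) * ∑ u ∈ U, (χ u : ℂ) := by
    intro U k
    rw [← Equiv.sum_comp (Equiv.mulLeft k) (fun h => if k⁻¹ * h ∈ U then (χ h : ℂ) else 0)]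
    simp only [Equiv.coe_mulLeft, inv_mul_cancel_left]
    rw [Finset.sum_ite_mem, Finset.univ_inter, Finset.mul_sum]
    exact Finset.sum_congr rfl fun u _ => by rw [map_mul]; push_cast; ring
  -- the number of in-neighbours from X1
  have hNval : ∀ y : X,
      (∑ k : H, if R ((k : G) • x1) y then (1 : ℂ) else 0)
        = if y ∈ orbit H x1 then (S.card : ℂ) else (T.card : ℂ) := by
    intro y
    rcases horb y with hy | hy
    · have hy' : ∃ a : H, (a : G) • x1 = y := hy
      obtain ⟨a, rfl⟩ := hy'
      have hmem : ((a : G) • x1) ∈ orbit H x1 := ⟨a, rfl⟩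
      rw [if_pos hmem,
        Finset.sum_congr rfl fun k _ => if_congr (hRS k a) rfl rfl]
      exact hcount S a
    · have hy' : ∃ a : H, (a : G) • x2 = y := hy
      obtain ⟨a, rfl⟩ := hy'
      have hnmem : ¬ ((a : G) • x2) ∈ orbit H x1 := fun h1 => hdis ((a : G) • x2) h1 ⟨a, rfl⟩
      rw [if_neg hnmem,
        Finset.sum_congr rfl fun k _ => if_congr (hRT k a) rfl rfl]
      exact hcount T a
  have hNalt : ∀ y : X,
      (∑ z : X, if R z y ∧ z ∈ orbit H x1 then (1 : ℂ) else 0)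
        = ∑ k : H, if R ((k : G) • x1) y then (1 : ℂ) else 0 := by
    intro y
    rw [hsplit]
    have h2 : (∑ k : H, if R ((k : G) • x2) y ∧ (k : G) • x2 ∈ orbit H x1 then (1 : ℂ) else 0)
        = 0 :=
      Finset.sum_eq_zero fun k _ => if_neg fun hc => hdis _ hc.2 ⟨k, rfl⟩
    rw [h2, add_zero]
    exact Finset.sum_congr rfl fun k _ => if_congr (and_iff_left ⟨k, rfl⟩) rfl rfl
  -- determinant expression
  have hdetexpr : Matrix.det
      (!![(∑ h ∈ S, ((χ h : ℂˣ) : ℂ)), (∑ h ∈ T, ((χ h : ℂˣ) : ℂ));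
          (∑ h ∈ Q, ((χ h : ℂˣ) : ℂ)), (∑ h ∈ Rr, ((χ h : ℂˣ) : ℂ))]
        - d • (1 : Matrix (Fin 2) (Fin 2) ℂ))
      = ((∑ h ∈ S, (χ h : ℂ)) - d) * ((∑ h ∈ Rr, (χ h : ℂ)) - d)
        - (∑ h ∈ T, (χ h : ℂ)) * (∑ h ∈ Q, (χ h : ℂ)) := by
    have e1 : (!![(∑ h ∈ S, ((χ h : ℂˣ) : ℂ)), (∑ h ∈ T, ((χ h : ℂˣ) : ℂ));
          (∑ h ∈ Q, ((χ h : ℂˣ) : ℂ)), (∑ h ∈ Rr, ((χ h : ℂˣ) : ℂ))]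
        - d • (1 : Matrix (Fin 2) (Fin 2) ℂ))
        = !![(∑ h ∈ S, (χ h : ℂ)) - d, (∑ h ∈ T, (χ h : ℂ));
            (∑ h ∈ Q, (χ h : ℂ)), (∑ h ∈ Rr, (χ h : ℂ)) - d] := by
      ext i j
      fin_cases i <;> fin_cases j <;>
        simp [Matrix.one_apply, Matrix.smul_apply, Matrix.sub_apply]
    rw [e1, Matrix.det_fin_two_of]
  -- abbreviations
  set σ : ℂ := ∑ h : H, (χ h : ℂ) with hσdef
  set m : ℂ := ∑ h : H, (if g • ((h : G) • x1) ∈ orbit H x1 then (χ h : ℂ) else 0) with hmdef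
  set n : ℂ := ∑ h : H, (if g • ((h : G) • x2) ∈ orbit H x1 then (χ h : ℂ) else 0) with hndef
  -- the main double-counting identity
  have main : ∀ (x : X) (U1 U2 : Finset H),
      (∀ k h : H, R ((k : G) • x1) ((h : G) • x) ↔ k⁻¹ * h ∈ U1) →
      (∀ k h : H, R ((k : G) • x2) ((h : G) • x) ↔ k⁻¹ * h ∈ U2) →
      (∑ u ∈ U1, (χ u : ℂ)) * m + (∑ u ∈ U2, (χ u : ℂ)) * n
        = (S.card : ℂ) * (∑ h : H, if g • ((h : G) • x) ∈ orbit H x1 then (χ h : ℂ) else 0)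
          + (T.card : ℂ)
            * (σ - ∑ h : H, if g • ((h : G) • x) ∈ orbit H x1 then (χ h : ℂ) else 0) := by
    intro x U1 U2 hU1 hU2
    have way1 :
        (∑ h : H, ∑ z : X, if R z ((h : G) • x) ∧ g • z ∈ orbit H x1 then (χ h : ℂ) else 0)
          = (∑ u ∈ U1, (χ u : ℂ)) * m + (∑ u ∈ U2, (χ u : ℂ)) * n := by
      rw [Finset.sum_comm,
        hsplit (fun z => ∑ h : H, if R z ((h : G) • x) ∧ g • z ∈ orbit H x1
          then (χ h : ℂ) else 0)]
      congr 1
      · have e2 : ∀ k : H,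
            (∑ h : H, if R ((k : G) • x1) ((h : G) • x) ∧ g • ((k : G) • x1) ∈ orbit H x1
              then (χ h : ℂ) else 0)
            = (∑ u ∈ U1, (χ u : ℂ))
                * (if g • ((k : G) • x1) ∈ orbit H x1 then (χ k : ℂ) else 0) := by
          intro k
          by_cases hk : g • ((k : G) • x1) ∈ orbit H x1
          · rw [if_pos hk,
              Finset.sum_congr rfl fun h _ =>
                if_congr ((and_iff_left hk).trans (hU1 k h)) rfl rfl,
              hw U1 k]
            ring
          · rw [if_neg hk, mul_zero]
            exact Finset.sum_eq_zero fun h _ => if_neg fun hc => hk hc.2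
        rw [Finset.sum_congr rfl fun k _ => e2 k, ← Finset.mul_sum, hmdef]
      · have e2 : ∀ k : H,
            (∑ h : H, if R ((k : G) • x2) ((h : G) • x) ∧ g • ((k : G) • x2) ∈ orbit H x1
              then (χ h : ℂ) else 0)
            = (∑ u ∈ U2, (χ u : ℂ))
                * (if g • ((k : G) • x2) ∈ orbit H x1 then (χ k : ℂ) else 0) := by
          intro k
          by_cases hk : g • ((k : G) • x2) ∈ orbit H x1
          · rw [if_pos hk,
              Finset.sum_congr rfl fun h _ =>
                if_congr ((and_iff_left hk).trans (hU2 k h)) rfl rfl,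
              hw U2 k]
            ring
          · rw [if_neg hk, mul_zero]
            exact Finset.sum_eq_zero fun h _ => if_neg fun hc => hk hc.2
        rw [Finset.sum_congr rfl fun k _ => e2 k, ← Finset.mul_sum, hndef]
    have way2 :
        (∑ h : H, ∑ z : X, if R z ((h : G) • x) ∧ g • z ∈ orbit H x1 then (χ h : ℂ) else 0)
          = ∑ h : H, (χ h : ℂ)
              * (if g • ((h : G) • x) ∈ orbit H x1 then (S.card : ℂ) else (T.card : ℂ)) := by
      apply Finset.sum_congr rfl
      intro h _
      have step1 : (∑ z : X, if R z ((h : G) • x) ∧ g • z ∈ orbit H x1 then (χ h : ℂ) else 0)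
          = ∑ z : X, if R z (g • ((h : G) • x)) ∧ z ∈ orbit H x1 then (χ h : ℂ) else 0 := by
        rw [← Equiv.sum_comp (MulAction.toPerm g⁻¹ : Equiv.Perm X)
              (fun z => if R z ((h : G) • x) ∧ g • z ∈ orbit H x1 then (χ h : ℂ) else 0)]
        apply Finset.sum_congr rfl
        intro z _
        simp only [MulAction.toPerm_apply]
        refine if_congr ?_ rfl rfl
        have h3 := hinv g (g⁻¹ • z) ((h : G) • x)
        rw [smul_inv_smul] at h3
        rw [smul_inv_smul, ← h3]
      rw [step1]
      have step2 : (∑ z : X, if R z (g • ((h : G) • x)) ∧ z ∈ orbit H x1 then (χ h : ℂ) else 0)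
          = (χ h : ℂ)
              * ∑ z : X, if R z (g • ((h : G) • x)) ∧ z ∈ orbit H x1 then (1 : ℂ) else 0 := by
        rw [Finset.mul_sum]
        exact Finset.sum_congr rfl fun z _ => by split_ifs <;> ring
      rw [step2, hNalt, hNval]
    have way3 :
        (∑ h : H, (χ h : ℂ)
            * (if g • ((h : G) • x) ∈ orbit H x1 then (S.card : ℂ) else (T.card : ℂ)))
          = (S.card : ℂ) * (∑ h : H, if g • ((h : G) • x) ∈ orbit H x1 then (χ h : ℂ) else 0)
            + (T.card : ℂ)
              * (σ - ∑ h : H, if g • ((h : G) • x) ∈ orbit H x1 then (χ h : ℂ) else 0) := by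
      have e3 : ∀ h : H, (χ h : ℂ)
            * (if g • ((h : G) • x) ∈ orbit H x1 then (S.card : ℂ) else (T.card : ℂ))
          = (S.card : ℂ) * (if g • ((h : G) • x) ∈ orbit H x1 then (χ h : ℂ) else 0)
            + (T.card : ℂ)
              * ((χ h : ℂ) - if g • ((h : G) • x) ∈ orbit H x1 then (χ h : ℂ) else 0) := by
        intro h
        split_ifs <;> ring
      rw [Finset.sum_congr rfl fun h _ => e3 h, Finset.sum_add_distrib, ← Finset.mul_sum,
        ← Finset.mul_sum, Finset.sum_sub_distrib, hσdef]
    exact way1.symm.trans (way2.trans way3)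
  have eqA := main x1 S Q hRS hRQ
  have eqB := main x2 T Rr hRT hRR
  rw [← hmdef] at eqA
  rw [← hndef] at eqB
  by_cases hσ0 : σ = 0
  · -- χ is nontrivial; the linear system forces m = n = 0
    have eqA' : ((∑ u ∈ S, (χ u : ℂ)) - d) * m + (∑ u ∈ Q, (χ u : ℂ)) * n = 0 := by
      linear_combination eqA - m * hd + (T.card : ℂ) * hσ0
    have eqB' : (∑ u ∈ T, (χ u : ℂ)) * m + ((∑ u ∈ Rr, (χ u : ℂ)) - d) * n = 0 := by
      linear_combination eqB - n * hd + (T.card : ℂ) * hσ0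
    have hD : ((∑ h ∈ S, (χ h : ℂ)) - d) * ((∑ h ∈ Rr, (χ h : ℂ)) - d)
        - (∑ h ∈ T, (χ h : ℂ)) * (∑ h ∈ Q, (χ h : ℂ)) ≠ 0 := by
      rw [← hdetexpr]; exact hχ
    constructor
    · have hm : (((∑ h ∈ S, (χ h : ℂ)) - d) * ((∑ h ∈ Rr, (χ h : ℂ)) - d)
          - (∑ h ∈ T, (χ h : ℂ)) * (∑ h ∈ Q, (χ h : ℂ))) * m = 0 := by
        linear_combination ((∑ u ∈ Rr, (χ u : ℂ)) - d) * eqA' - (∑ u ∈ Q, (χ u : ℂ)) * eqB'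
      exact (mul_eq_zero.mp hm).resolve_left hD
    · have hn : (((∑ h ∈ S, (χ h : ℂ)) - d) * ((∑ h ∈ Rr, (χ h : ℂ)) - d)
          - (∑ h ∈ T, (χ h : ℂ)) * (∑ h ∈ Q, (χ h : ℂ))) * n = 0 := by
        linear_combination ((∑ u ∈ S, (χ u : ℂ)) - d) * eqB' - (∑ u ∈ T, (χ u : ℂ)) * eqA'
      exact (mul_eq_zero.mp hn).resolve_left hD
  · -- χ must be trivial, contradicting the determinant condition
    exfalso
    have htriv : ∀ h : H, (χ h : ℂ) = 1 := by
      intro h0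
      have hmul : (χ h0 : ℂ) * σ = σ := by
        rw [hσdef, Finset.mul_sum,
          ← Equiv.sum_comp (Equiv.mulLeft h0) (fun h => (χ h : ℂ))]
        exact Finset.sum_congr rfl fun u _ => by
          simp only [Equiv.coe_mulLeft]
          rw [map_mul]; push_cast; ring
      exact mul_right_cancel₀ hσ0 (hmul.trans (one_mul σ).symm)
    have hcard : ∀ U : Finset H, (∑ u ∈ U, (χ u : ℂ)) = U.card := fun U => by
      rw [Finset.sum_congr rfl fun u _ => htriv u]; simp
    -- in-degree equality from transitivity
    have hdeg : (S.card : ℂ) + Q.card = (T.card : ℂ) + Rr.card := by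
      obtain ⟨g0, hg0⟩ := htrans x1 x2
      have e1 : ∀ k : H, R ((k : G) • x1) x1 ↔ k⁻¹ * 1 ∈ S := fun k => by
        have := hRS k 1; rwa [show (((1 : H) : G)) • x1 = x1 by simp] at this
      have e2 : ∀ k : H, R ((k : G) • x2) x1 ↔ k⁻¹ * 1 ∈ Q := fun k => by
        have := hRQ k 1; rwa [show (((1 : H) : G)) • x1 = x1 by simp] at this
      have e3 : ∀ k : H, R ((k : G) • x1) x2 ↔ k⁻¹ * 1 ∈ T := fun k => by
        have := hRT k 1; rwa [show (((1 : H) : G)) • x2 = x2 by simp] at this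
      have e4 : ∀ k : H, R ((k : G) • x2) x2 ↔ k⁻¹ * 1 ∈ Rr := fun k => by
        have := hRR k 1; rwa [show (((1 : H) : G)) • x2 = x2 by simp] at this
      have hd1 : (∑ z : X, if R z x1 then (1 : ℂ) else 0) = (S.card : ℂ) + Q.card := by
        rw [hsplit (fun z => if R z x1 then (1 : ℂ) else 0),
          Finset.sum_congr rfl fun k _ => if_congr (e1 k) rfl rfl,
          Finset.sum_congr rfl fun k _ => if_congr (e2 k) rfl rfl,
          hcount S 1, hcount Q 1]
      have hd2 : (∑ z : X, if R z x2 then (1 : ℂ) else 0) = (T.card : ℂ) + Rr.card := by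
        rw [hsplit (fun z => if R z x2 then (1 : ℂ) else 0),
          Finset.sum_congr rfl fun k _ => if_congr (e3 k) rfl rfl,
          Finset.sum_congr rfl fun k _ => if_congr (e4 k) rfl rfl,
          hcount T 1, hcount Rr 1]
      have hd3 : (∑ z : X, if R z x2 then (1 : ℂ) else 0)
          = ∑ z : X, if R z x1 then (1 : ℂ) else 0 := by
        rw [← hg0,
          ← Equiv.sum_comp (MulAction.toPerm g0 : Equiv.Perm X)
            (fun z => if R z (g0 • x1) then (1 : ℂ) else 0)]
        exact Finset.sum_congr rfl fun z _ => by
          simp only [MulAction.toPerm_apply]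
          exact if_congr (hinv g0 z x1) rfl rfl
      rw [← hd1, ← hd2, hd3]
    apply hχ
    rw [hdetexpr, hcard S, hcard T, hcard Q, hcard Rr, hd]
    linear_combination (-(T.card : ℂ)) * hdeg
end

section
/- Let n' ≥ 1 and s' be integers, and let ξ = e^{2πi/n'}. If (ξ + ξ^{-1} − 1)(ξ^{s'} + ξ^{-s'} − 1) = 1 and n' > 1, then either n' = 4 and s' ≡ ±1 (mod 4), or n' = 5 and s' ≡ ±2 (mod 5). -/
open Complex

/-- If `ξ = e^{2πi/n'}` with `n' > 1` and `(ξ + ξ⁻¹ − 1)(ξ^{s'} + ξ^{−s'} − 1) = 1`,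
then either `n' = 4` and `s' ≡ ±1 (mod 4)`, or `n' = 5` and `s' ≡ ±2 (mod 5)`. -/
theorem stmt18 (n' : ℕ) (s' : ℤ) (hn : 1 ≤ n') (h1 : 1 < n')
    (ξ : ℂ) (hξ : ξ = Complex.exp (2 * Real.pi * Complex.I / n'))
    (heq : (ξ + ξ⁻¹ - 1) * (ξ ^ s' + ξ ^ (-s') - 1) = 1) :
    (n' = 4 ∧ (s' ≡ 1 [ZMOD 4] ∨ s' ≡ -1 [ZMOD 4])) ∨
    (n' = 5 ∧ (s' ≡ 2 [ZMOD 5] ∨ s' ≡ -2 [ZMOD 5])) := by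
  have hπ := Real.pi_pos
  have hnR : (0:ℝ) < (n' : ℝ) := by exact_mod_cast Nat.pos_of_ne_zero (by omega)
  set α : ℝ := 2 * Real.pi / n' with hα
  have hξ' : ξ = Complex.exp (↑α * Complex.I) := by
    rw [hξ]; congr 1; push_cast [hα]; ring
  have key : ∀ t : ℤ, ξ ^ t = Complex.exp (↑((t : ℝ) * α) * Complex.I) := by
    intro t
    rw [hξ', ← Complex.exp_int_mul]
    congr 1; push_cast; ring
  have hpair : ∀ t : ℤ, ξ ^ t + ξ ^ (-t) = 2 * Complex.cos (↑((t:ℝ) * α)) := by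
    intro t
    rw [key t, key (-t), Complex.exp_mul_I, Complex.exp_mul_I]
    push_cast
    simp [Complex.cos_neg, Complex.sin_neg, neg_mul]
    ring
  have hinv : ξ⁻¹ = ξ ^ (-1 : ℤ) := by rw [zpow_neg, zpow_one]
  have h1pair : ξ + ξ⁻¹ = 2 * Complex.cos (↑α) := by
    have := hpair 1
    rw [hinv]
    simpa using this
  rw [h1pair, hpair s'] at heq
  have hR : (2 * Real.cos α - 1) * (2 * Real.cos ((s':ℝ) * α) - 1) = 1 := by
    have h2 : ((2 * Real.cos α - 1) * (2 * Real.cos ((s':ℝ) * α) - 1) : ℂ) = 1 := by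
      push_cast [Complex.ofReal_cos] at heq ⊢
      convert heq using 2
    exact_mod_cast h2
  clear heq hpair key hξ' hξ hinv h1pair
  -- reduce s' mod n'
  have hs0 : s' % (n':ℤ) + (n':ℤ) * (s' / (n':ℤ)) = s' := Int.emod_add_mul_ediv s' n'
  have hs : ((s' % n' : ℤ) : ℝ) + ((s' / n' : ℤ) : ℝ) * (n' : ℝ) = (s' : ℝ) := by
    rw [mul_comm]; exact_mod_cast hs0
  have hsplit : (s':ℝ) * α = ((s' % n' : ℤ) : ℝ) * α + ((s' / n' : ℤ) : ℝ) * (2 * Real.pi) := by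
    have h2 : ((s' / n' : ℤ) : ℝ) * (2 * Real.pi) = ((s' / n' : ℤ) : ℝ) * (n':ℝ) * α := by
      rw [hα]; field_simp
    linear_combination (-α) * hs - h2
  rw [hsplit, Real.cos_add_int_mul_two_pi] at hR
  -- rule out n' ≥ 7
  have h6 : n' ≤ 6 := by
    by_contra hbig
    push_neg at hbig
    have h7 : (7:ℝ) ≤ (n':ℝ) := by exact_mod_cast hbig
    have hαlt : α < Real.pi / 3 := by
      rw [hα, div_lt_iff₀ hnR]
      nlinarith
    have hαpos : 0 < α := by positivity
    have hc1 : (1:ℝ)/2 < Real.cos α := by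
      have := Real.cos_lt_cos_of_nonneg_of_le_pi (le_of_lt hαpos) (by linarith) hαlt
      rwa [Real.cos_pi_div_three] at this
    have hc2 : Real.cos α < 1 := by
      have := Real.cos_lt_cos_of_nonneg_of_le_pi (le_refl 0)
        (by rw [hα]; rw [div_le_iff₀ hnR]; nlinarith) hαpos
      rwa [Real.cos_zero] at this
    have hd : Real.cos (((s' % n' : ℤ) : ℝ) * α) ≤ 1 := Real.cos_le_one _
    have hv : 0 < 2 * Real.cos (((s' % n' : ℤ) : ℝ) * α) - 1 := by nlinarith
    nlinarith
  set r : ℤ := s' % n' with hrdef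
  have hr0 : 0 ≤ r := Int.emod_nonneg _ (by exact_mod_cast (by omega : (n':ℤ) ≠ 0))
  have hr1 : r < n' := Int.emod_lt_of_pos _ (by exact_mod_cast (by omega : (0:ℤ) < n'))
  interval_cases n'
  · -- n' = 2 : α = π
    have hα2 : α = Real.pi := by rw [hα]; push_cast; ring
    rw [hα2] at hR
    have : r = 0 ∨ r = 1 := by omega
    rcases this with h | h <;> rw [h] at hR <;>
      simp [Real.cos_pi] at hR <;> nlinarith [hR]
  · -- n' = 3
    have hc : Real.cos α = -(1/2) := by
      have h3 : α = 2 * (Real.pi/3) := by rw [hα]; push_cast; ring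
      rw [h3, Real.cos_two_mul, Real.cos_pi_div_three]; norm_num
    have hcases : r = 0 ∨ r = 1 ∨ r = 2 := by omega
    rcases hcases with h | h | h <;> rw [h] at hR <;> push_cast at hR
    · rw [hc] at hR; norm_num at hR
    · rw [one_mul, hc] at hR; norm_num at hR
    · have h2 : (2:ℝ) * α = 2 * Real.pi - α := by rw [hα]; push_cast; ring
      rw [h2, Real.cos_two_pi_sub, hc] at hR; norm_num at hR
  · -- n' = 4
    have hα4 : α = Real.pi / 2 := by rw [hα]; push_cast; ring
    have hc : Real.cos α = 0 := by rw [hα4, Real.cos_pi_div_two]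
    have hcases : r = 0 ∨ r = 1 ∨ r = 2 ∨ r = 3 := by omega
    rcases hcases with h | h | h | h <;> rw [h] at hR <;> push_cast at hR
    · rw [hc] at hR; norm_num at hR
    · exact Or.inl ⟨rfl, Or.inl (by show s' % 4 = 1 % 4; omega)⟩
    · have h2 : (2:ℝ) * α = Real.pi := by rw [hα4]; ring
      rw [h2, Real.cos_pi, hc] at hR; norm_num at hR
    · exact Or.inl ⟨rfl, Or.inr (by show s' % 4 = (-1) % 4; omega)⟩
  · -- n' = 5
    have hs5 : Real.sqrt 5 ^ 2 = 5 := Real.sq_sqrt (by norm_num)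
    have hlb : 2 < Real.sqrt 5 := by nlinarith [Real.sqrt_nonneg 5]
    have hub : Real.sqrt 5 < 3 := by nlinarith [Real.sqrt_nonneg 5]
    have hc : Real.cos α = (Real.sqrt 5 - 1)/4 := by
      have h5 : α = 2 * (Real.pi/5) := by rw [hα]; push_cast; ring
      rw [h5, Real.cos_two_mul, Real.cos_pi_div_five]
      linear_combination (1/8) * hs5
    have hc2 : Real.cos (2 * α) = -(1 + Real.sqrt 5)/4 := by
      rw [Real.cos_two_mul, hc]
      linear_combination (1/8) * hs5
    have hcases : r = 0 ∨ r = 1 ∨ r = 2 ∨ r = 3 ∨ r = 4 := by omega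
    rcases hcases with h | h | h | h | h <;> rw [h] at hR <;> push_cast at hR
    · rw [hc] at hR; norm_num at hR; nlinarith
    · rw [one_mul, hc] at hR; nlinarith
    · exact Or.inr ⟨rfl, Or.inl (by show s' % 5 = 2 % 5; omega)⟩
    · exact Or.inr ⟨rfl, Or.inr (by show s' % 5 = (-2) % 5; omega)⟩
    · have h4 : (4:ℝ) * α = 2 * Real.pi - α := by rw [hα]; push_cast; ring
      rw [h4, Real.cos_two_pi_sub, hc] at hR; nlinarith
  · -- n' = 6
    have hc : Real.cos α = 1/2 := by
      have h6 : α = Real.pi/3 := by rw [hα]; push_cast; ring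
      rw [h6, Real.cos_pi_div_three]
    rw [hc] at hR; norm_num at hR
end
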